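/- Let K be a field of odd characteristic and let E be an elliptic curve over K given by a Weierstrass equation with origin O. Let δ ≥ 1, d = 2^δ, and let t ∈ E(K) be a point of order d. For any scalars (f_l)_{l∈Z/dZ} and (g_l)_{l∈Z/dZ} in K, set F = ∑_{l∈Z/dZ} f_l u_l and G = ∑_{l∈Z/dZ} g_l u_l in L(⟨t⟩), and set C = ∑_{l∈Z/dZ} (f_l − f_{l−1})(g_l − g_{l−1}) x_l, where x_l = x∘τ_{−lt} and indices are taken modulo d. Then the difference F·G − C lies in L(⟨t⟩). -/

import Mathlib

/-!
Let `z_B` be the translate to `B` of the uniformizer `x / y` at `O`. The slope function `u_{0,T}`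
has at most simple poles, at `O` and at `T`; its `z⁻¹`-coefficient is `1` at `O` by a direct
computation and `-1` at `T` because `∑ u_{lT,(l+1)T}` is constant. Translating, `u_l` has
`z⁻¹`-coefficients `1` at `lt` and `-1` at `(l+1)t`, while `x_l` has a double pole at `lt` with
`z⁻²`-coefficient `1`. So at `P = mt` the function `F G - C` has a pole of order at most two whose
`z_P⁻²`-coefficient is `(f_m - f_{m-1})(g_m - g_{m-1}) - (f_m - f_{m-1})(g_m - g_{m-1}) = 0`, and
away from `⟨t⟩` it is regular.

The pole bounds for `u_{0,T}` rest on `x - x(Q)` having order `1` at `Q ≠ -Q` and `2` at `Q = -Q`,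
which is where the maximal ideal `(x - x(Q), y - y(Q))` of `K[x, y]` at `Q` and the
nonsingularity of `Q` enter.
-/

noncomputable section

open WeierstrassCurve

open scoped Classical

variable {K : Type*} [Field K]

/-- The `x`-coordinate of an affine point (junk value `0` at the point at infinity). -/
def ptX {W : Affine K} : W.Point → K
  | .zero => 0
  | @Affine.Point.some _ _ _ x _ _ => x

/-- The `y`-coordinate of an affine point (junk value `0` at the point at infinity). -/
def ptY {W : Affine K} : W.Point → K
  | .zero => 0
  | @Affine.Point.some _ _ _ _ y _ => y

/-- A model of the function field of the elliptic curve `W` over `K`, together with the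
coordinate functions `x`, `y`, the pullbacks of functions along translations and negation,
the order of vanishing of a (nonzero) function at each rational point, and the evaluation of
a function at a rational point.  All the listed axioms hold for the genuine function field
`K(E)` of `E = W`, where `τ A f = f ∘ (· + A)`, `ι f = f ∘ (-·)`, `ord P f` is the valuation
of `f` at `P`, and `eval P f` is the value `f(P)` (junk if `P` is a pole of `f`). -/
structure FunModel (W : Affine K) where
  /-- the function field -/
  F : Type*
  /-- `F` is a field -/
  fieldF : Field F
  /-- `F` is a `K`-algebra -/
  algebraF : Algebra K F
  /-- the coordinate function `x` -/
  x : F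
  /-- the coordinate function `y` -/
  y : F
  /-- `x` and `y` satisfy the Weierstrass equation of `W` -/
  equation : y ^ 2 + algebraMap K F W.a₁ * x * y + algebraMap K F W.a₃ * y
      = x ^ 3 + algebraMap K F W.a₂ * x ^ 2 + algebraMap K F W.a₄ * x + algebraMap K F W.a₆
  /-- the function field is generated over `K` by `x` and `y` -/
  adjoin_x_y : IntermediateField.adjoin K {x, y} = ⊤
  /-- pullback of a function along the translation map `P ↦ P + A` -/
  τ : W.Point → F ≃ₐ[K] F
  τ_zero : τ 0 = AlgEquiv.refl
  τ_add : ∀ A B : W.Point, τ (A + B) = (τ A).trans (τ B)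
  /-- pullback of a function along the negation map `P ↦ -P` -/
  ι : F ≃ₐ[K] F
  ι_x : ι x = x
  ι_y : ι y = -y - algebraMap K F W.a₁ * x - algebraMap K F W.a₃
  ι_τ : ∀ (A : W.Point) (f : F), ι (τ A f) = τ (-A) (ι f)
  /-- the order of vanishing at a rational point of a nonzero function
  (junk value at the zero function); poles have negative order -/
  ord : W.Point → F → ℤ
  ord_mul : ∀ (P : W.Point) (f g : F), f ≠ 0 → g ≠ 0 → ord P (f * g) = ord P f + ord P g
  ord_min_le_add : ∀ (P : W.Point) (f g : F), f ≠ 0 → g ≠ 0 → f + g ≠ 0 →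
    min (ord P f) (ord P g) ≤ ord P (f + g)
  ord_algebraMap : ∀ (P : W.Point) (c : K), c ≠ 0 → ord P (algebraMap K F c) = 0
  ord_τ : ∀ (A P : W.Point) (f : F), ord P (τ A f) = ord (P + A) f
  ord_ι : ∀ (P : W.Point) (f : F), ord P (ι f) = ord (-P) f
  ord_x_zero : ord 0 x = -2
  ord_y_zero : ord 0 y = -3
  ord_x_nonneg : ∀ P : W.Point, P ≠ 0 → 0 ≤ ord P x
  ord_y_nonneg : ∀ P : W.Point, P ≠ 0 → 0 ≤ ord P y
  ord_x_sub_pos : ∀ P : W.Point, P ≠ 0 → 0 < ord P (x - algebraMap K F (ptX P))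
  /-- evaluation of a function at a rational point (junk value at poles) -/
  eval : W.Point → F → K
  eval_algebraMap : ∀ (P : W.Point) (c : K), eval P (algebraMap K F c) = c
  eval_x : ∀ P : W.Point, P ≠ 0 → eval P x = ptX P
  eval_y : ∀ P : W.Point, P ≠ 0 → eval P y = ptY P
  eval_add : ∀ (P : W.Point) (f g : F), (f = 0 ∨ 0 ≤ ord P f) → (g = 0 ∨ 0 ≤ ord P g) →
    eval P (f + g) = eval P f + eval P g
  eval_mul : ∀ (P : W.Point) (f g : F), (f = 0 ∨ 0 ≤ ord P f) → (g = 0 ∨ 0 ≤ ord P g) →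
    eval P (f * g) = eval P f * eval P g
  eval_τ : ∀ (A P : W.Point) (f : F), eval P (τ A f) = eval (P + A) f
  eval_ι : ∀ (P : W.Point) (f : F), eval P (ι f) = eval (-P) f
  eval_eq_zero_iff : ∀ (P : W.Point) (f : F), f ≠ 0 → 0 ≤ ord P f →
    (eval P f = 0 ↔ 0 < ord P f)

attribute [instance] FunModel.fieldF FunModel.algebraF

/-- `Γ(A,B,C)`: the slope of the secant (or tangent) line to `W` through the points
`C - A` and `A - B`. -/
noncomputable def Γsec {K : Type*} [Field K] {W : WeierstrassCurve.Affine K}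
    (A B C : W.Point) : K :=
  W.slope (ptX (C - A)) (ptX (A - B)) (ptY (C - A)) (ptY (A - B))

namespace FunModel

variable {W : Affine K} (S : FunModel W)

/-- The translate `f_A = f ∘ τ_{-A}` of a function `f` by a point `A`. -/
def trN (A : W.Point) (f : S.F) : S.F := S.τ (-A) f

/-- The function `u_{A,B} = (y_A - y(A-B)) / (x_A - x(A-B))` attached to two distinct
points `A`, `B` of `W`. -/
def u (A B : W.Point) : S.F :=
  (S.trN A S.y - algebraMap K S.F (ptY (A - B))) /
    (S.trN A S.x - algebraMap K S.F (ptX (A - B)))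

/-- The Riemann–Roch space (as a subset of the function field) of the divisor `D`,
a divisor being given as a finitely supported function `W.Point → ℤ`; membership of a
nonzero `f` means `ord_P(f) + D(P) ≥ 0` for every point `P`. -/
def RRset (D : W.Point → ℤ) : Set S.F :=
  {f | f = 0 ∨ ∀ P : W.Point, -(D P) ≤ S.ord P f}

end FunModel

/-- The divisor `⟨t⟩ = ∑_{l ∈ ℤ/dℤ} [l • t]` attached to the cyclic subgroup generated
by a point `t` of a Weierstrass curve `W`, as a function `W.Point → ℤ`. -/
def cycDiv {K : Type*} [Field K] {W : WeierstrassCurve.Affine K} (t : W.Point) :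
    W.Point → ℤ :=
  fun P => if P ∈ AddSubgroup.zmultiples t then 1 else 0


namespace FunModel

variable {W : Affine K} {S : FunModel W} {P Q : W.Point}

theorem ord_one (P : W.Point) : S.ord P 1 = 0 := by
  simpa using S.ord_algebraMap P 1 one_ne_zero

theorem ord_neg (P : W.Point) (f : S.F) : S.ord P (-f) = S.ord P f := by
  rcases eq_or_ne f 0 with rfl | hf
  · rw [neg_zero]
  · rw [← neg_one_mul, ← map_one (algebraMap K S.F), ← map_neg,
      S.ord_mul P _ f (by simp) hf, S.ord_algebraMap P _ (by simp), zero_add]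

theorem ord_pow (P : W.Point) {f : S.F} (hf : f ≠ 0) (n : ℕ) :
    S.ord P (f ^ n) = n * S.ord P f := by
  induction n with
  | zero => simpa using ord_one P
  | succ n ih =>
    rw [pow_succ, S.ord_mul P _ f (pow_ne_zero n hf) hf, ih]
    push_cast
    ring

theorem ord_div (P : W.Point) {f g : S.F} (hf : f ≠ 0) (hg : g ≠ 0) :
    S.ord P (f / g) = S.ord P f - S.ord P g := by
  have h := S.ord_mul P (f / g) g (div_ne_zero hf hg) hg
  rw [div_mul_cancel₀ f hg] at h
  omega

variable (S) in
def OrdGe (P : W.Point) (n : ℤ) (f : S.F) : Prop := f = 0 ∨ n ≤ S.ord P f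

theorem mem_RRset_iff {D : W.Point → ℤ} {f : S.F} :
    f ∈ S.RRset D ↔ ∀ P, S.OrdGe P (-D P) f := by
  by_cases hf : f = 0 <;> simp [RRset, OrdGe, hf]

theorem ordGe_algebraMap {n : ℤ} (c : K) (hn : n ≤ 0) : S.OrdGe P n (algebraMap K S.F c) := by
  rcases eq_or_ne c 0 with rfl | hc
  · exact Or.inl (map_zero _)
  · exact Or.inr (by rwa [S.ord_algebraMap P c hc])

namespace OrdGe

variable {n m : ℤ} {f g : S.F}

theorem zero (P : W.Point) (n : ℤ) : S.OrdGe P n 0 := Or.inl rfl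

theorem of_le (h : n ≤ S.ord P f) : S.OrdGe P n f := Or.inr h

theorem le_ord (h : S.OrdGe P n f) (hf : f ≠ 0) : n ≤ S.ord P f := h.resolve_left hf

theorem mono (h : S.OrdGe P n f) (hmn : m ≤ n) : S.OrdGe P m f :=
  h.imp_right hmn.trans

theorem add (hf : S.OrdGe P n f) (hg : S.OrdGe P n g) : S.OrdGe P n (f + g) := by
  rcases eq_or_ne f 0 with rfl | hf0
  · rwa [zero_add]
  rcases eq_or_ne g 0 with rfl | hg0
  · rwa [add_zero]
  rcases eq_or_ne (f + g) 0 with h0 | h0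
  · exact Or.inl h0
  exact of_le <| (le_min (hf.le_ord hf0) (hg.le_ord hg0)).trans
    (S.ord_min_le_add P f g hf0 hg0 h0)

theorem mul (hf : S.OrdGe P m f) (hg : S.OrdGe P n g) : S.OrdGe P (m + n) (f * g) := by
  rcases eq_or_ne f 0 with rfl | hf0
  · exact Or.inl (zero_mul g)
  rcases eq_or_ne g 0 with rfl | hg0
  · exact Or.inl (mul_zero f)
  exact of_le <| by
    rw [S.ord_mul P f g hf0 hg0]
    exact add_le_add (hf.le_ord hf0) (hg.le_ord hg0)

theorem pow (hf : S.OrdGe P n f) (k : ℕ) : S.OrdGe P (k * n) (f ^ k) := by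
  induction k with
  | zero => exact of_le (by simp [ord_one])
  | succ k ih => simpa [pow_succ, add_mul] using ih.mul hf

theorem smul (c : K) (hf : S.OrdGe P n f) : S.OrdGe P n (c • f) := by
  simpa [Algebra.smul_def] using (ordGe_algebraMap c le_rfl).mul hf

theorem algebraMap_mul (c : K) (hf : S.OrdGe P n f) :
    S.OrdGe P n (algebraMap K S.F c * f) := by
  simpa [Algebra.smul_def] using hf.smul c

theorem neg (hf : S.OrdGe P n f) : S.OrdGe P n (-f) := by
  simpa using hf.smul (-1)

theorem sub (hf : S.OrdGe P n f) (hg : S.OrdGe P n g) : S.OrdGe P n (f - g) := by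
  rw [sub_eq_add_neg]
  exact hf.add hg.neg

theorem sum {ι : Type*} (s : Finset ι) {φ : ι → S.F} (h : ∀ i ∈ s, S.OrdGe P n (φ i)) :
    S.OrdGe P n (∑ i ∈ s, φ i) := by
  classical
  induction s using Finset.induction_on with
  | empty => exact zero P n
  | insert i s hi ih =>
    rw [Finset.sum_insert hi]
    exact (h i (s.mem_insert_self i)).add (ih fun j hj => h j (Finset.mem_insert_of_mem hj))

theorem div (hf : S.OrdGe P n f) (hg : g ≠ 0) : S.OrdGe P (n - S.ord P g) (f / g) := by
  rcases eq_or_ne f 0 with rfl | hf0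
  · exact Or.inl (zero_div g)
  · exact of_le (by rw [ord_div P hf0 hg]; linarith [hf.le_ord hf0])

end OrdGe

theorem add_ne_zero_of_ord_lt {n : ℤ} {f g : S.F} (hf : f ≠ 0) (hg : S.OrdGe P n g)
    (h : S.ord P f < n) : f + g ≠ 0 := by
  intro h0
  rw [eq_neg_of_add_eq_zero_right h0] at hg
  have := hg.le_ord (neg_ne_zero.mpr hf)
  rw [ord_neg] at this
  omega

theorem ord_add_of_ord_lt {n : ℤ} {f g : S.F} (hf : f ≠ 0) (hg : S.OrdGe P n g)
    (h : S.ord P f < n) : S.ord P (f + g) = S.ord P f := by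
  rcases eq_or_ne g 0 with rfl | hg0
  · rw [add_zero]
  have hfg := add_ne_zero_of_ord_lt hf hg h
  have := hg.le_ord hg0
  have := S.ord_min_le_add P f g hf hg0 hfg
  have := S.ord_min_le_add P (f + g) (-g) hfg (neg_ne_zero.mpr hg0) (by simpa using hf)
  rw [add_neg_cancel_right, ord_neg] at this
  omega

theorem eval_zero (P : W.Point) : S.eval P 0 = 0 := by
  simpa using S.eval_algebraMap P 0

theorem eval_smul {f : S.F} (c : K) (hf : S.OrdGe P 0 f) : S.eval P (c • f) = c * S.eval P f := by
  rw [Algebra.smul_def, S.eval_mul P _ f (ordGe_algebraMap c le_rfl) hf, S.eval_algebraMap]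

theorem eval_sub {f g : S.F} (hf : S.OrdGe P 0 f) (hg : S.OrdGe P 0 g) :
    S.eval P (f - g) = S.eval P f - S.eval P g := by
  rw [sub_eq_add_neg, S.eval_add P f _ hf hg.neg, ← neg_one_smul K g, eval_smul _ hg]
  ring

theorem eval_sum {ι : Type*} (s : Finset ι) {φ : ι → S.F} (h : ∀ i ∈ s, S.OrdGe P 0 (φ i)) :
    S.eval P (∑ i ∈ s, φ i) = ∑ i ∈ s, S.eval P (φ i) := by
  classical
  induction s using Finset.induction_on with
  | empty => simpa using eval_zero P
  | insert i s hi ih =>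
    have hs : ∀ j ∈ s, S.OrdGe P 0 (φ j) := fun j hj => h j (Finset.mem_insert_of_mem hj)
    rw [Finset.sum_insert hi, Finset.sum_insert hi,
      S.eval_add P _ _ (h i (s.mem_insert_self i)) (OrdGe.sum s hs), ih hs]

theorem ordGe_one_iff_eval_eq_zero {f : S.F} (hf : S.OrdGe P 0 f) :
    S.OrdGe P 1 f ↔ S.eval P f = 0 := by
  rcases eq_or_ne f 0 with rfl | hf0
  · simp [OrdGe.zero, eval_zero]
  · rw [S.eval_eq_zero_iff P f hf0 (hf.le_ord hf0), OrdGe, or_iff_right hf0]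
    exact Order.one_le_iff_pos

theorem ord_eq_zero_of_eval_ne_zero {f : S.F} (hf : S.OrdGe P 0 f) (h : S.eval P f ≠ 0) :
    S.ord P f = 0 := by
  have hf0 : f ≠ 0 := by rintro rfl; exact h (eval_zero P)
  have := hf.le_ord hf0
  have := mt (ordGe_one_iff_eval_eq_zero hf).mp h
  rw [OrdGe, not_or, not_le] at this
  omega

theorem eval_eq_of_ordGe_one_sub {f : S.F} {c : K}
    (h : S.OrdGe P 1 (f - algebraMap K S.F c)) : S.eval P f = c := by
  have hc : S.OrdGe P 0 (algebraMap K S.F c) := ordGe_algebraMap c le_rfl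
  rw [← sub_add_cancel f (algebraMap K S.F c), S.eval_add P _ _ (h.mono zero_le_one) hc,
    (ordGe_one_iff_eval_eq_zero (h.mono zero_le_one)).mp h, S.eval_algebraMap, zero_add]

theorem ordGe_one_sub_eval {f : S.F} (hf : S.OrdGe P 0 f) :
    S.OrdGe P 1 (f - algebraMap K S.F (S.eval P f)) := by
  have hc := ordGe_algebraMap (S := S) (P := P) (S.eval P f) le_rfl
  rw [ordGe_one_iff_eval_eq_zero (hf.sub hc), eval_sub hf hc, S.eval_algebraMap, sub_self]

theorem trN_zero (f : S.F) : S.trN 0 f = f := by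
  simp [trN, S.τ_zero]

theorem trN_trN (A B : W.Point) (f : S.F) : S.trN A (S.trN B f) = S.trN (A + B) f := by
  simp only [trN, neg_add_rev, S.τ_add, AlgEquiv.trans_apply]

theorem ord_trN (A P : W.Point) (f : S.F) : S.ord P (S.trN A f) = S.ord (P - A) f := by
  rw [trN, S.ord_τ, sub_eq_add_neg]

theorem eval_trN (A P : W.Point) (f : S.F) : S.eval P (S.trN A f) = S.eval (P - A) f := by
  rw [trN, S.eval_τ, sub_eq_add_neg]

theorem trN_mul (A : W.Point) (f g : S.F) : S.trN A (f * g) = S.trN A f * S.trN A g :=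
  map_mul _ f g

theorem trN_pow (A : W.Point) (f : S.F) (n : ℕ) : S.trN A (f ^ n) = S.trN A f ^ n :=
  map_pow _ f n

theorem trN_ne_zero (A : W.Point) {f : S.F} (hf : f ≠ 0) : S.trN A f ≠ 0 :=
  (map_ne_zero_iff _ (S.τ (-A)).injective).mpr hf

theorem OrdGe.trN {n : ℤ} {f : S.F} (A : W.Point) (hf : S.OrdGe (P - A) n f) :
    S.OrdGe P n (S.trN A f) := by
  rcases eq_or_ne f 0 with rfl | hf0
  · exact Or.inl (map_zero _)
  · exact of_le (by rw [ord_trN]; exact hf.le_ord hf0)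

theorem x_ne_zero : S.x ≠ 0 := by
  intro hx
  have hy : S.y ≠ 0 := by
    intro hy
    have := S.ord_x_zero
    rw [hx, ← hy, S.ord_y_zero] at this
    omega
  have h : S.y ^ 2 + (algebraMap K S.F W.a₃ * S.y - algebraMap K S.F W.a₆) = 0 := by
    have := S.equation
    rw [hx] at this
    linear_combination this
  refine add_ne_zero_of_ord_lt (P := 0) (n := -3) (pow_ne_zero 2 hy) ?_ ?_ h
  · exact ((OrdGe.of_le S.ord_y_zero.ge).algebraMap_mul _).sub (ordGe_algebraMap _ (by norm_num))
  · rw [ord_pow 0 hy, S.ord_y_zero]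
    norm_num

theorem y_ne_zero : S.y ≠ 0 := by
  intro hy
  have h : S.x ^ 3 + (algebraMap K S.F W.a₂ * S.x ^ 2 + algebraMap K S.F W.a₄ * S.x
      + algebraMap K S.F W.a₆) = 0 := by
    have := S.equation
    rw [hy] at this
    linear_combination -this
  have hx : S.OrdGe 0 (-2) S.x := .of_le S.ord_x_zero.ge
  have hx2 : S.OrdGe 0 (-4) (algebraMap K S.F W.a₂ * S.x ^ 2) :=
    ((hx.pow 2).algebraMap_mul _).mono (by norm_num)
  have hx1 : S.OrdGe 0 (-4) (algebraMap K S.F W.a₄ * S.x) :=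
    (hx.algebraMap_mul _).mono (by norm_num)
  have hx0 : S.OrdGe 0 (-4) (algebraMap K S.F W.a₆) := ordGe_algebraMap _ (by norm_num)
  refine add_ne_zero_of_ord_lt (pow_ne_zero 3 x_ne_zero) ((hx2.add hx1).add hx0) ?_ h
  rw [ord_pow 0 x_ne_zero, S.ord_x_zero]
  norm_num

theorem x_sub_algebraMap_ne_zero (c : K) : S.x - algebraMap K S.F c ≠ 0 := by
  rw [sub_eq_add_neg]
  exact add_ne_zero_of_ord_lt x_ne_zero (ordGe_algebraMap c le_rfl).neg
    (by rw [S.ord_x_zero]; norm_num)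

theorem ord_zero_x_sub_algebraMap (c : K) : S.ord 0 (S.x - algebraMap K S.F c) = -2 := by
  rw [sub_eq_add_neg, ← S.ord_x_zero]
  exact ord_add_of_ord_lt x_ne_zero (ordGe_algebraMap c le_rfl).neg
    (by rw [S.ord_x_zero]; norm_num)

theorem y_sub_algebraMap_ne_zero (c : K) : S.y - algebraMap K S.F c ≠ 0 := by
  rw [sub_eq_add_neg]
  exact add_ne_zero_of_ord_lt y_ne_zero (ordGe_algebraMap c le_rfl).neg
    (by rw [S.ord_y_zero]; norm_num)

theorem ord_x_div_y : S.ord 0 (S.x / S.y) = 1 := by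
  rw [ord_div 0 x_ne_zero y_ne_zero, S.ord_x_zero, S.ord_y_zero]
  norm_num

variable (S) in
def localParam (B : W.Point) : S.F := S.trN B (S.x / S.y)

theorem ord_localParam (B : W.Point) : S.ord B (S.localParam B) = 1 := by
  rw [localParam, ord_trN, sub_self, ord_x_div_y]

theorem localParam_ne_zero (B : W.Point) : S.localParam B ≠ 0 :=
  trN_ne_zero B (div_ne_zero x_ne_zero y_ne_zero)

variable (S) in
/-- For `f` with a pole of order at most `n` at `B`, the coefficient of `z_B ^ (-n)` in the
Laurent expansion of `f` in the uniformizer `z_B = S.localParam B`. -/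
def lead (n : ℕ) (B : W.Point) (f : S.F) : K := S.eval B (f * S.localParam B ^ n)

section lead

variable {B : W.Point} {m n : ℕ} {f g : S.F}

theorem OrdGe.mul_localParam_pow (hf : S.OrdGe B (-n) f) :
    S.OrdGe B 0 (f * S.localParam B ^ n) :=
  (hf.mul ((OrdGe.of_le (ord_localParam B).ge).pow n)).mono (by simp)

theorem lead_add (hf : S.OrdGe B (-n) f) (hg : S.OrdGe B (-n) g) :
    S.lead n B (f + g) = S.lead n B f + S.lead n B g := by
  rw [lead, add_mul, S.eval_add B _ _ hf.mul_localParam_pow hg.mul_localParam_pow]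
  rfl

theorem lead_sub (hf : S.OrdGe B (-n) f) (hg : S.OrdGe B (-n) g) :
    S.lead n B (f - g) = S.lead n B f - S.lead n B g := by
  rw [lead, sub_mul, eval_sub hf.mul_localParam_pow hg.mul_localParam_pow]
  rfl

theorem lead_smul (c : K) (hf : S.OrdGe B (-n) f) : S.lead n B (c • f) = c * S.lead n B f := by
  rw [lead, smul_mul_assoc, eval_smul c hf.mul_localParam_pow]
  rfl

theorem lead_sum {ι : Type*} (s : Finset ι) {φ : ι → S.F} (h : ∀ i ∈ s, S.OrdGe B (-n) (φ i)) :
    S.lead n B (∑ i ∈ s, φ i) = ∑ i ∈ s, S.lead n B (φ i) := by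
  rw [lead, Finset.sum_mul, eval_sum s fun i hi => (h i hi).mul_localParam_pow]
  rfl

theorem lead_mul (hf : S.OrdGe B (-m) f) (hg : S.OrdGe B (-n) g) :
    S.lead (m + n) B (f * g) = S.lead m B f * S.lead n B g := by
  rw [lead, lead, lead, ← S.eval_mul B _ _ hf.mul_localParam_pow hg.mul_localParam_pow]
  ring_nf

theorem lead_eq_zero (hf : S.OrdGe B (1 - n) f) : S.lead n B f = 0 := by
  have h1 : S.OrdGe B 1 (f * S.localParam B ^ n) :=
    (hf.mul ((OrdGe.of_le (ord_localParam B).ge).pow n)).mono (by simp)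
  exact (ordGe_one_iff_eval_eq_zero (h1.mono zero_le_one)).mp h1

theorem OrdGe.of_lead_eq_zero (hf : S.OrdGe B (-n) f) (h : S.lead n B f = 0) :
    S.OrdGe B (1 - n) f := by
  have h1 := (ordGe_one_iff_eval_eq_zero hf.mul_localParam_pow).mpr h
  rcases eq_or_ne f 0 with rfl | hf0
  · exact .zero B _
  have hz := localParam_ne_zero (S := S) B
  have := h1.le_ord (mul_ne_zero hf0 (pow_ne_zero n hz))
  rw [S.ord_mul B _ _ hf0 (pow_ne_zero n hz), ord_pow B hz, ord_localParam] at this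
  exact .of_le (by linarith)

theorem lead_trN (A : W.Point) : S.lead n B (S.trN A f) = S.lead n (B - A) f := by
  have hz : S.localParam B = S.trN A (S.localParam (B - A)) := by
    rw [localParam, localParam, trN_trN, add_sub_cancel]
  rw [lead, lead, hz, ← trN_pow, ← trN_mul, eval_trN]

end lead

theorem lead_u_zero_zero (T : W.Point) : S.lead 1 0 (S.u 0 T) = 1 := by
  set a := ptX (0 - T)
  set b := ptY (0 - T)
  have hD := x_sub_algebraMap_ne_zero (S := S) a
  have key : (S.y - algebraMap K S.F b) / (S.x - algebraMap K S.F a) * (S.x / S.y)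
      - algebraMap K S.F 1 = (algebraMap K S.F a * S.y - algebraMap K S.F b * S.x)
        / (S.y * (S.x - algebraMap K S.F a)) := by
    rw [map_one]
    field_simp [y_ne_zero (S := S)]
    ring
  rw [lead, localParam, u, trN_zero, trN_zero, trN_zero, pow_one]
  refine eval_eq_of_ordGe_one_sub ?_
  rw [key]
  have hnum : S.OrdGe 0 (-3) (algebraMap K S.F a * S.y - algebraMap K S.F b * S.x) :=
    ((OrdGe.of_le S.ord_y_zero.ge).algebraMap_mul a).sub
      (((OrdGe.of_le S.ord_x_zero.ge).algebraMap_mul b).mono (by norm_num))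
  refine (hnum.div (mul_ne_zero y_ne_zero hD)).mono ?_
  rw [S.ord_mul 0 _ _ y_ne_zero hD, S.ord_y_zero, ord_zero_x_sub_algebraMap a]
  norm_num

theorem lead_x_zero : S.lead 2 0 S.x = 1 := by
  have key : S.x * (S.x / S.y) ^ 2 - algebraMap K S.F 1 =
      (algebraMap K S.F W.a₁ * S.x * S.y + algebraMap K S.F W.a₃ * S.y
        - algebraMap K S.F W.a₂ * S.x ^ 2 - algebraMap K S.F W.a₄ * S.x
        - algebraMap K S.F W.a₆) / S.y ^ 2 := by
    rw [map_one]
    field_simp [y_ne_zero (S := S)]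
    linear_combination -S.equation
  rw [lead, localParam, trN_zero]
  refine eval_eq_of_ordGe_one_sub ?_
  rw [key]
  have hx : S.OrdGe 0 (-2) S.x := .of_le S.ord_x_zero.ge
  have hy : S.OrdGe 0 (-3) S.y := .of_le S.ord_y_zero.ge
  have hnum : S.OrdGe 0 (-5) (algebraMap K S.F W.a₁ * S.x * S.y + algebraMap K S.F W.a₃ * S.y
      - algebraMap K S.F W.a₂ * S.x ^ 2 - algebraMap K S.F W.a₄ * S.x
      - algebraMap K S.F W.a₆) :=
    (((((hx.algebraMap_mul _).mul hy).add ((hy.algebraMap_mul _).mono (by norm_num))).sub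
      (((hx.pow 2).algebraMap_mul _).mono (by norm_num))).sub
      ((hx.algebraMap_mul _).mono (by norm_num))).sub (ordGe_algebraMap _ (by norm_num))
  refine (hnum.div (pow_ne_zero 2 y_ne_zero)).mono ?_
  rw [ord_pow 0 y_ne_zero, S.ord_y_zero]
  norm_num


theorem ordGe_x (hQ : Q ≠ 0) : S.OrdGe Q 0 S.x := .of_le (S.ord_x_nonneg Q hQ)

theorem ordGe_y (hQ : Q ≠ 0) : S.OrdGe Q 0 S.y := .of_le (S.ord_y_nonneg Q hQ)

theorem ordGe_one_x_sub_ptX (hQ : Q ≠ 0) : S.OrdGe Q 1 (S.x - algebraMap K S.F (ptX Q)) :=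
  S.eval_x Q hQ ▸ ordGe_one_sub_eval (ordGe_x hQ)

theorem ordGe_one_y_sub_ptY (hQ : Q ≠ 0) : S.OrdGe Q 1 (S.y - algebraMap K S.F (ptY Q)) :=
  S.eval_y Q hQ ▸ ordGe_one_sub_eval (ordGe_y hQ)

variable (S) in
def coordRing : Subalgebra K S.F := Algebra.adjoin K {S.x, S.y}

theorem x_mem_coordRing : S.x ∈ S.coordRing := Algebra.subset_adjoin (by simp)

theorem y_mem_coordRing : S.y ∈ S.coordRing := Algebra.subset_adjoin (by simp)

theorem OrdGe.of_mem_coordRing {r : S.F} (hr : r ∈ S.coordRing) (hQ : Q ≠ 0) :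
    S.OrdGe Q 0 r := by
  induction hr using Algebra.adjoin_induction with
  | mem r hr =>
    obtain rfl | rfl := hr
    exacts [ordGe_x hQ, ordGe_y hQ]
  | algebraMap c => exact ordGe_algebraMap c le_rfl
  | add f g _ _ hf hg => exact hf.add hg
  | mul f g _ _ hf hg => exact hf.mul hg

theorem exists_eq_div_of_mem_coordRing (f : S.F) :
    ∃ r ∈ S.coordRing, ∃ s ∈ S.coordRing, f = r / s :=
  IntermediateField.mem_adjoin_iff_div.mp (S.adjoin_x_y ▸ IntermediateField.mem_top)

theorem exists_eq_algebraMap_add_mul_add_mul (x₀ y₀ : K) {r : S.F} (hr : r ∈ S.coordRing) :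
    ∃ c : K, ∃ α ∈ S.coordRing, ∃ β ∈ S.coordRing, r = algebraMap K S.F c
      + α * (S.x - algebraMap K S.F x₀) + β * (S.y - algebraMap K S.F y₀) := by
  set R := S.coordRing
  have hξ : S.x - algebraMap K S.F x₀ ∈ R := sub_mem x_mem_coordRing (R.algebraMap_mem _)
  have hη : S.y - algebraMap K S.F y₀ ∈ R := sub_mem y_mem_coordRing (R.algebraMap_mem _)
  let I : Ideal R := Ideal.span {⟨_, hξ⟩, ⟨_, hη⟩}
  have hI : ∀ r (hr : r ∈ R), ∃ c : K, (⟨r, hr⟩ : R) - algebraMap K R c ∈ I := by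
    intro r hr
    induction hr using Algebra.adjoin_induction with
    | mem r hr =>
      obtain rfl | rfl := hr
      exacts [⟨x₀, Ideal.subset_span (Set.mem_insert _ _)⟩,
        ⟨y₀, Ideal.subset_span (Set.mem_insert_of_mem _ rfl)⟩]
    | algebraMap c =>
      refine ⟨c, ?_⟩
      change algebraMap K R c - algebraMap K R c ∈ I
      rw [sub_self]
      exact I.zero_mem
    | add f g hf hg ihf ihg =>
      obtain ⟨c, hc⟩ := ihf
      obtain ⟨c', hc'⟩ := ihg
      refine ⟨c + c', ?_⟩
      convert I.add_mem hc hc' using 1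
      change (⟨f, hf⟩ + ⟨g, hg⟩ : R) - _ = _
      rw [map_add]
      abel
    | mul f g hf hg ihf ihg =>
      obtain ⟨c, hc⟩ := ihf
      obtain ⟨c', hc'⟩ := ihg
      refine ⟨c * c', ?_⟩
      convert I.add_mem (I.mul_mem_right ⟨g, hg⟩ hc) (I.mul_mem_left (algebraMap K R c) hc')
        using 1
      change (⟨f, hf⟩ * ⟨g, hg⟩ : R) - _ = _
      rw [map_mul]
      ring
  obtain ⟨c, hc⟩ := hI r hr
  obtain ⟨α, β, hαβ⟩ := Ideal.mem_span_pair.mp hc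
  have hαβ' : α.1 * (S.x - algebraMap K S.F x₀) + β.1 * (S.y - algebraMap K S.F y₀)
      = r - algebraMap K S.F c := congrArg Subtype.val hαβ
  exact ⟨c, α, α.2, β, β.2, by rw [add_assoc, hαβ', add_sub_cancel]⟩

theorem exists_eq_mul_add_mul_of_eval_eq_zero (hQ : Q ≠ 0) {r : S.F} (hr : r ∈ S.coordRing)
    (h : S.eval Q r = 0) : ∃ α ∈ S.coordRing, ∃ β ∈ S.coordRing,
      r = α * (S.x - algebraMap K S.F (ptX Q)) + β * (S.y - algebraMap K S.F (ptY Q)) := by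
  obtain ⟨c, α, hα, β, hβ, hr⟩ := exists_eq_algebraMap_add_mul_add_mul (ptX Q) (ptY Q) hr
  have hc : S.eval Q r = c := by
    refine eval_eq_of_ordGe_one_sub ?_
    rw [hr, add_assoc, add_sub_cancel_left]
    exact (((OrdGe.of_mem_coordRing hα hQ).mul (ordGe_one_x_sub_ptX hQ)).add
      ((OrdGe.of_mem_coordRing hβ hQ).mul (ordGe_one_y_sub_ptY hQ))).mono (by norm_num)
  refine ⟨α, hα, β, hβ, ?_⟩
  rw [hr, ← hc, h, map_zero, zero_add]

/-- Dividing by `ξ` via `η V = ξ U`, with `V` a unit at `Q`, lowers the order of an element of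
`K[x, y]` vanishing at `Q`. -/
theorem ord_dvd_ord_of_mem_coordRing (hQ : Q ≠ 0) {ξ η U V : S.F} (hξ0 : ξ ≠ 0)
    (hξ : S.OrdGe Q 1 ξ)
    (hgen : ∀ r ∈ S.coordRing, S.eval Q r = 0 →
      ∃ α ∈ S.coordRing, ∃ β ∈ S.coordRing, r = α * ξ + β * η)
    (hU : U ∈ S.coordRing) (hV : V ∈ S.coordRing) (hVQ : S.eval Q V ≠ 0)
    (hUV : η * V = ξ * U) {r : S.F} (hr : r ∈ S.coordRing) (hr0 : r ≠ 0) :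
    S.ord Q ξ ∣ S.ord Q r := by
  have hV0 : V ≠ 0 := by rintro rfl; exact hVQ (eval_zero Q)
  have hordV : S.ord Q V = 0 := ord_eq_zero_of_eval_ne_zero (.of_mem_coordRing hV hQ) hVQ
  have hordξ := hξ.le_ord hξ0
  induction hN : (S.ord Q r).toNat using Nat.strong_induction_on generalizing r with
  | _ N ih =>
  by_cases he : S.eval Q r = 0
  · obtain ⟨α, hα, β, hβ, rfl⟩ := hgen r hr he
    have hr₁ : α * V + β * U ∈ S.coordRing := add_mem (mul_mem hα hV) (mul_mem hβ hU)
    have hkey : (α * ξ + β * η) * V = ξ * (α * V + β * U) := by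
      linear_combination β * hUV
    have hr₁0 : α * V + β * U ≠ 0 := by
      rintro h0
      rw [h0, mul_zero] at hkey
      exact hr0 ((mul_eq_zero.mp hkey).resolve_right hV0)
    have hord := congrArg (S.ord Q) hkey
    rw [S.ord_mul Q _ _ hr0 hV0, S.ord_mul Q _ _ hξ0 hr₁0, hordV, add_zero] at hord
    have := (OrdGe.of_mem_coordRing hr₁ hQ).le_ord hr₁0
    rw [hord]
    exact dvd_add dvd_rfl (ih _ (by omega) hr₁ hr₁0 rfl)
  · rw [ord_eq_zero_of_eval_ne_zero (.of_mem_coordRing hr hQ) he]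
    exact dvd_zero _

theorem ord_eq_one_of_mul_eq_mul (hQ : Q ≠ 0) {ξ η U V : S.F} (hξ0 : ξ ≠ 0)
    (hξ : S.OrdGe Q 1 ξ)
    (hgen : ∀ r ∈ S.coordRing, S.eval Q r = 0 →
      ∃ α ∈ S.coordRing, ∃ β ∈ S.coordRing, r = α * ξ + β * η)
    (hU : U ∈ S.coordRing) (hV : V ∈ S.coordRing) (hVQ : S.eval Q V ≠ 0)
    (hUV : η * V = ξ * U) : S.ord Q ξ = 1 := by
  obtain ⟨r, hr, s, hs, hz⟩ := exists_eq_div_of_mem_coordRing (S.localParam Q)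
  have hz0 := localParam_ne_zero (S := S) Q
  have hr0 : r ≠ 0 := by rintro rfl; exact hz0 (hz.trans (zero_div s))
  have hs0 : s ≠ 0 := by rintro rfl; exact hz0 (hz.trans (div_zero r))
  have h1 : S.ord Q ξ ∣ 1 := by
    rw [← ord_localParam Q, hz, ord_div Q hr0 hs0]
    exact dvd_sub (ord_dvd_ord_of_mem_coordRing hQ hξ0 hξ hgen hU hV hVQ hUV hr hr0)
      (ord_dvd_ord_of_mem_coordRing hQ hξ0 hξ hgen hU hV hVQ hUV hs hs0)
  exact Int.eq_one_of_dvd_one (hξ.le_ord hξ0 |>.trans' zero_le_one) h1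

variable (S) in
def xCofactor (x₀ : K) : S.F :=
  S.x ^ 2 + algebraMap K S.F x₀ * S.x + algebraMap K S.F (x₀ ^ 2)
    + algebraMap K S.F W.a₂ * (S.x + algebraMap K S.F x₀) + algebraMap K S.F W.a₄
    - algebraMap K S.F W.a₁ * S.y

theorem y_sub_mul_eq_x_sub_mul_xCofactor {x₀ y₀ : K} (h : W.Equation x₀ y₀) :
    (S.y - algebraMap K S.F y₀) *
        (S.y - algebraMap K S.F y₀ + algebraMap K S.F (2 * y₀ + W.a₁ * x₀ + W.a₃)) =
      (S.x - algebraMap K S.F x₀) * S.xCofactor x₀ := by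
  have h' := congrArg (algebraMap K S.F) ((W.equation_iff x₀ y₀).mp h)
  simp only [xCofactor, map_add, map_mul, map_pow, map_ofNat] at h' ⊢
  linear_combination S.equation - h'

theorem xCofactor_mem_coordRing (x₀ : K) : S.xCofactor x₀ ∈ S.coordRing := by
  unfold xCofactor
  apply_rules [add_mem, sub_mem, mul_mem, pow_mem, Subalgebra.algebraMap_mem, x_mem_coordRing,
    y_mem_coordRing]

theorem eval_xCofactor {x₀ y₀ : K} (h : W.Nonsingular x₀ y₀) :
    S.eval (.some x₀ y₀ h) (S.xCofactor x₀) = 3 * x₀ ^ 2 + 2 * W.a₂ * x₀ + W.a₄ - W.a₁ * y₀ := by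
  have hQ := Affine.Point.some_ne_zero h
  have hxy : S.xCofactor x₀ - algebraMap K S.F (3 * x₀ ^ 2 + 2 * W.a₂ * x₀ + W.a₄ - W.a₁ * y₀) =
      (S.x + algebraMap K S.F (2 * x₀ + W.a₂)) * (S.x - algebraMap K S.F x₀)
        - algebraMap K S.F W.a₁ * (S.y - algebraMap K S.F y₀) := by
    simp only [xCofactor, map_add, map_sub, map_mul, map_pow, map_ofNat]
    ring
  refine eval_eq_of_ordGe_one_sub ?_
  rw [hxy]
  exact ((((ordGe_x hQ).add (ordGe_algebraMap _ le_rfl)).mul (ordGe_one_x_sub_ptX hQ)).sub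
    ((ordGe_one_y_sub_ptY hQ).algebraMap_mul _)).mono (by norm_num)

theorem ord_x_sub_ptX_eq_one (hQ : Q ≠ 0) (hQ2 : Q ≠ -Q) :
    S.ord Q (S.x - algebraMap K S.F (ptX Q)) = 1 := by
  cases Q with
  | zero => exact absurd rfl hQ
  | some x₀ y₀ h =>
  have hc : 2 * y₀ + W.a₁ * x₀ + W.a₃ ≠ 0 := fun hc =>
    hQ2 (by rw [Affine.Point.neg_some, Affine.Point.some.injEq, Affine.negY]
            exact ⟨rfl, by linear_combination hc⟩)
  refine ord_eq_one_of_mul_eq_mul hQ (x_sub_algebraMap_ne_zero _) (ordGe_one_x_sub_ptX hQ)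
    (fun r hr he => exists_eq_mul_add_mul_of_eval_eq_zero hQ hr he) (xCofactor_mem_coordRing x₀)
    (add_mem (sub_mem y_mem_coordRing (Subalgebra.algebraMap_mem _ _))
      (Subalgebra.algebraMap_mem _ _)) ?_ (y_sub_mul_eq_x_sub_mul_xCofactor h.1)
  rwa [eval_eq_of_ordGe_one_sub (by rw [add_sub_cancel_right]; exact ordGe_one_y_sub_ptY hQ)]

theorem ord_x_sub_ptX_eq_two (hQ : Q ≠ 0) (hQ2 : Q = -Q) :
    S.ord Q (S.x - algebraMap K S.F (ptX Q)) = 2 := by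
  cases Q with
  | zero => exact absurd rfl hQ
  | some x₀ y₀ h =>
  change S.ord _ (S.x - algebraMap K S.F x₀) = 2
  have hc : 2 * y₀ + W.a₁ * x₀ + W.a₃ = 0 := by
    rw [Affine.Point.neg_some, Affine.Point.some.injEq, Affine.negY] at hQ2
    linear_combination hQ2.2
  set g := S.xCofactor x₀
  have hid : (S.x - algebraMap K S.F x₀) * g =
      (S.y - algebraMap K S.F y₀) * (S.y - algebraMap K S.F y₀) := by
    have := y_sub_mul_eq_x_sub_mul_xCofactor (S := S) h.1
    rw [hc, map_zero, add_zero] at this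
    exact this.symm
  have hg : S.eval (.some x₀ y₀ h) g ≠ 0 := by
    have hX := ((W.nonsingular_iff' x₀ y₀).mp h).2.resolve_right (not_not.mpr hc)
    rw [eval_xCofactor]
    exact fun h0 => hX (by linear_combination -h0)
  have hy1 := ord_eq_one_of_mul_eq_mul hQ (y_sub_algebraMap_ne_zero y₀) (ordGe_one_y_sub_ptY hQ)
    (fun r hr he => by
      obtain ⟨α, hα, β, hβ, rfl⟩ := exists_eq_mul_add_mul_of_eval_eq_zero hQ hr he
      exact ⟨β, hβ, α, hα, add_comm _ _⟩)
    (sub_mem y_mem_coordRing (Subalgebra.algebraMap_mem _ _)) (xCofactor_mem_coordRing x₀) hg hid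
  have hg0 := ord_eq_zero_of_eval_ne_zero (.of_mem_coordRing (xCofactor_mem_coordRing x₀) hQ) hg
  have hg0' : g ≠ 0 := by rintro h0; exact hg (by rw [h0, eval_zero])
  have := congrArg (S.ord (.some x₀ y₀ h)) hid
  rw [S.ord_mul _ _ _ (x_sub_algebraMap_ne_zero _) hg0', hg0,
    S.ord_mul _ _ _ (y_sub_algebraMap_ne_zero _) (y_sub_algebraMap_ne_zero _), hy1] at this
  omega

theorem ptX_neg (P : W.Point) : ptX (-P) = ptX P := by
  cases P <;> rfl

theorem eq_or_eq_neg_of_ptX_eq {P Q : W.Point} (hP : P ≠ 0) (hQ : Q ≠ 0) (h : ptX P = ptX Q) :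
    P = Q ∨ P = -Q := by
  cases P with
  | zero => exact absurd rfl hP
  | some =>
    cases Q with
    | zero => exact absurd rfl hQ
    | some => exact Affine.Point.X_eq_iff.mp h

theorem u_eq_trN (A B : W.Point) : S.u A B = S.trN A (S.u 0 (B - A)) := by
  rw [u, u, trN_zero, trN_zero, zero_sub, neg_sub]
  simp only [trN, map_div₀, map_sub, AlgEquiv.commutes]

theorem u_zero (T : W.Point) : S.u 0 T =
    (S.y - algebraMap K S.F (ptY (-T))) / (S.x - algebraMap K S.F (ptX (-T))) := by
  rw [u, trN_zero, trN_zero, zero_sub]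

theorem ordGe_u_zero_zero (T : W.Point) : S.OrdGe 0 (-1) (S.u 0 T) := by
  rw [u_zero]
  have hnum : S.OrdGe 0 (-3) (S.y - algebraMap K S.F (ptY (-T))) :=
    (OrdGe.of_le S.ord_y_zero.ge).sub (ordGe_algebraMap _ (by norm_num))
  refine (hnum.div (x_sub_algebraMap_ne_zero _)).mono ?_
  rw [ord_zero_x_sub_algebraMap _]
  norm_num

section u_zero

variable {T : W.Point}

theorem ordGe_u_zero_self (hT : T ≠ 0) : S.OrdGe T (-1) (S.u 0 T) := by
  rw [u_zero, ptX_neg]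
  rcases eq_or_ne T (-T) with hT2 | hT2
  · rw [← hT2]
    refine ((ordGe_one_y_sub_ptY hT).div (x_sub_algebraMap_ne_zero _)).mono ?_
    rw [ord_x_sub_ptX_eq_two hT hT2]
    norm_num
  · refine (((ordGe_y hT).sub (ordGe_algebraMap _ le_rfl)).div
      (x_sub_algebraMap_ne_zero _)).mono ?_
    rw [ord_x_sub_ptX_eq_one hT hT2]
    norm_num

theorem ordGe_u_zero_of_ne (hT : T ≠ 0) (hQ : Q ≠ 0) (hQT : Q ≠ T) :
    S.OrdGe Q 0 (S.u 0 T) := by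
  rw [u_zero]
  rcases eq_or_ne Q (-T) with rfl | hQT'
  · refine ((ordGe_one_y_sub_ptY hQ).div (x_sub_algebraMap_ne_zero _)).mono ?_
    rw [ord_x_sub_ptX_eq_one hQ (by rwa [neg_neg])]
    norm_num
  · have hD : S.ord Q (S.x - algebraMap K S.F (ptX (-T))) = 0 := by
      refine ord_eq_zero_of_eval_ne_zero ((ordGe_x hQ).sub (ordGe_algebraMap _ le_rfl)) ?_
      rw [eval_sub (ordGe_x hQ) (ordGe_algebraMap _ le_rfl), S.eval_x Q hQ, S.eval_algebraMap,
        sub_ne_zero]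
      intro h
      rcases eq_or_eq_neg_of_ptX_eq hQ (neg_ne_zero.mpr hT) h with h | h
      exacts [hQT' h, hQT (by rwa [neg_neg] at h)]
    refine (((ordGe_y hQ).sub (ordGe_algebraMap _ le_rfl)).div
      (x_sub_algebraMap_ne_zero _)).mono ?_
    rw [hD, sub_zero]

theorem ordGe_u_zero (hT : T ≠ 0) (Q : W.Point) : S.OrdGe Q (-1) (S.u 0 T) := by
  rcases eq_or_ne Q 0 with rfl | hQ
  · exact ordGe_u_zero_zero T
  rcases eq_or_ne Q T with rfl | hQT
  · exact ordGe_u_zero_self hT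
  · exact (ordGe_u_zero_of_ne hT hQ hQT).mono (by norm_num)

/-- `∑ u_{lT,(l+1)T}` is constant, so its `z_T⁻¹`-coefficients cancel; only the terms `l = 0` and
`l = 1` have a pole at `T`, and the second contributes `1` by `lead_u_zero_zero`. -/
theorem lead_one_u_zero_self {d : ℕ} (hT : addOrderOf T = d) (hd : 1 < d) {a : K}
    (ha : algebraMap K S.F a = ∑ l ∈ Finset.range d, S.u (l • T) ((l + 1) • T)) :
    S.lead 1 T (S.u 0 T) = -1 := by
  have hT0 : T ≠ 0 := by rintro rfl; rw [addOrderOf_zero] at hT; omega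
  have hterm (l : ℕ) : S.u (l • T) ((l + 1) • T) = S.trN (l • T) (S.u 0 T) := by
    rw [u_eq_trN, succ_nsmul, add_sub_cancel_left]
  have h0 : S.lead 1 T (algebraMap K S.F a) = 0 := lead_eq_zero (ordGe_algebraMap a (by simp))
  rw [ha, Finset.sum_congr rfl fun l _ => hterm l,
    lead_sum _ fun l _ => (ordGe_u_zero hT0 _).trN _] at h0
  simp only [lead_trN] at h0
  have hmem : ∀ {l}, l < d → l ∈ Set.Iio (addOrderOf T) := fun hl => hT ▸ hl
  rw [Finset.sum_eq_add_of_mem 0 1 (Finset.mem_range.mpr (by omega))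
    (Finset.mem_range.mpr hd) zero_ne_one] at h0
  · rw [zero_nsmul, sub_zero, one_nsmul, sub_self, lead_u_zero_zero] at h0
    linear_combination h0
  · rintro l hl ⟨hl0, hl1⟩
    rw [Finset.mem_range] at hl
    refine lead_eq_zero ((ordGe_u_zero_of_ne hT0 ?_ ?_).mono (by norm_num))
    · rw [sub_ne_zero]
      exact fun h => hl1 (nsmul_injOn_Iio_addOrderOf (hmem hl) (hmem hd)
        (by simp only [one_nsmul]; exact h.symm))
    · rw [Ne, sub_eq_self]
      exact fun h => hl0 (nsmul_injOn_Iio_addOrderOf (hmem hl) (hmem (by omega))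
        (by simp only [zero_nsmul]; exact h))

theorem lead_one_u_zero (hT : T ≠ 0) (hres : S.lead 1 T (S.u 0 T) = -1) (B : W.Point) :
    S.lead 1 B (S.u 0 T) = (if B = 0 then 1 else 0) - (if B = T then 1 else 0) := by
  rcases eq_or_ne B 0 with rfl | hB0
  · simp [lead_u_zero_zero, hT.symm]
  rcases eq_or_ne B T with rfl | hBT
  · simp [hres, hB0]
  rw [if_neg hB0, if_neg hBT, sub_zero]
  exact lead_eq_zero ((ordGe_u_zero_of_ne hT hB0 hBT).mono (by norm_num))

end u_zero

theorem ordGe_x_neg_two (Q : W.Point) : S.OrdGe Q (-2) S.x := by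
  rcases eq_or_ne Q 0 with rfl | hQ
  · exact .of_le S.ord_x_zero.ge
  · exact (ordGe_x hQ).mono (by norm_num)

theorem lead_two_x (B : W.Point) : S.lead 2 B S.x = if B = 0 then 1 else 0 := by
  rcases eq_or_ne B 0 with rfl | hB0
  · rw [if_pos rfl, lead_x_zero]
  · rw [if_neg hB0]
    exact lead_eq_zero ((ordGe_x hB0).mono (by norm_num))

end FunModel

section Torsion

theorem ZMod.val_one_nsmul {G : Type*} [AddMonoid G] {d : ℕ} (hd : 1 < d) (t : G) :
    (1 : ZMod d).val • t = t := by
  rw [ZMod.val_one_eq_one_mod, Nat.mod_eq_of_lt hd, one_nsmul]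

variable {G : Type*} [AddCommGroup G] {d : ℕ} [NeZero d] {t : G}

theorem ZMod.val_sub_nsmul (ht : addOrderOf t = d) (a b : ZMod d) :
    (a - b).val • t = a.val • t - b.val • t := by
  rw [eq_sub_iff_add_eq, ← add_nsmul, ← mod_addOrderOf_nsmul, ht, ← ZMod.val_add,
    sub_add_cancel]

theorem ZMod.val_nsmul_eq_zero_iff (ht : addOrderOf t = d) (a : ZMod d) :
    a.val • t = 0 ↔ a = 0 := by
  rw [← addOrderOf_dvd_iff_nsmul_eq_zero, ht, ← ZMod.val_eq_zero]
  exact ⟨fun h => Nat.eq_zero_of_dvd_of_lt h a.val_lt, fun h => h ▸ dvd_zero d⟩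

theorem ZMod.val_nsmul_inj (ht : addOrderOf t = d) {a b : ZMod d} :
    a.val • t = b.val • t ↔ a = b := by
  rw [← sub_eq_zero, ← ZMod.val_sub_nsmul ht, ZMod.val_nsmul_eq_zero_iff ht, sub_eq_zero]

theorem ZMod.val_nsmul_eq_self_iff (ht : addOrderOf t = d) (hd : 1 < d) (a : ZMod d) :
    a.val • t = t ↔ a = 1 := by
  rw [← ZMod.val_nsmul_inj ht, ZMod.val_one_nsmul hd]

theorem exists_zmod_val_nsmul_eq (ht : addOrderOf t = d) {P : G}
    (hP : P ∈ AddSubgroup.zmultiples t) : ∃ m : ZMod d, m.val • t = P := by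
  obtain ⟨k, rfl⟩ := AddSubgroup.mem_zmultiples_iff.mp hP
  refine ⟨k, ?_⟩
  rw [← natCast_zsmul, ZMod.val_intCast, ← ht, mod_addOrderOf_zsmul]

theorem sub_nsmul_notMem_zmultiples {P : G} (hP : P ∉ AddSubgroup.zmultiples t) (k : ℕ) :
    P - k • t ∉ AddSubgroup.zmultiples t := fun h =>
  hP (by simpa using add_mem h (AddSubgroup.nsmul_mem _ (AddSubgroup.mem_zmultiples t) k))

end Torsion

namespace FunModel

variable {W : Affine K} {S : FunModel W} {d : ℕ} {t P : W.Point}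

section ul

variable {c : K} {ul : ZMod d → S.F}

theorem ordGe_ul (ht0 : t ≠ 0)
    (hul : ∀ l : ZMod d, ul l = S.trN (l.val • t) (S.u 0 t) + algebraMap K S.F c)
    (l : ZMod d) (P : W.Point) : S.OrdGe P (-1) (ul l) := by
  rw [hul]
  exact ((ordGe_u_zero ht0 _).trN _).add (ordGe_algebraMap _ (by norm_num))

theorem ordGe_ul_of_notMem (ht0 : t ≠ 0)
    (hul : ∀ l : ZMod d, ul l = S.trN (l.val • t) (S.u 0 t) + algebraMap K S.F c)
    (hP : P ∉ AddSubgroup.zmultiples t) (l : ZMod d) : S.OrdGe P 0 (ul l) := by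
  have hP' := sub_nsmul_notMem_zmultiples hP l.val
  rw [hul]
  exact ((ordGe_u_zero_of_ne ht0 (fun h => hP' (by rw [h]; exact zero_mem _))
    (fun h => hP' (by rw [h]; exact AddSubgroup.mem_zmultiples t))).trN _).add
    (ordGe_algebraMap _ le_rfl)

theorem lead_ul [NeZero d] (ht : addOrderOf t = d) (hd : 1 < d) (ht0 : t ≠ 0)
    (hres : S.lead 1 t (S.u 0 t) = -1)
    (hul : ∀ l : ZMod d, ul l = S.trN (l.val • t) (S.u 0 t) + algebraMap K S.F c)
    (m l : ZMod d) :
    S.lead 1 (m.val • t) (ul l) = (if l = m then 1 else 0) - (if l = m - 1 then 1 else 0) := by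
  have e : m - l = 1 ↔ l = m - 1 :=
    ⟨fun h => by linear_combination -h, fun h => by linear_combination -h⟩
  rw [hul, lead_add ((ordGe_u_zero ht0 _).trN _) (ordGe_algebraMap _ (by norm_num)),
    lead_eq_zero (ordGe_algebraMap _ (by norm_num)), add_zero, lead_trN,
    ← ZMod.val_sub_nsmul ht, lead_one_u_zero ht0 hres]
  simp only [ZMod.val_nsmul_eq_zero_iff ht, ZMod.val_nsmul_eq_self_iff ht hd, sub_eq_zero,
    @eq_comm _ m l, e]

theorem lead_sum_smul_ul [NeZero d] (ht : addOrderOf t = d) (hd : 1 < d) (ht0 : t ≠ 0)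
    (hres : S.lead 1 t (S.u 0 t) = -1)
    (hul : ∀ l : ZMod d, ul l = S.trN (l.val • t) (S.u 0 t) + algebraMap K S.F c)
    (f : ZMod d → K) (m : ZMod d) :
    S.lead 1 (m.val • t) (∑ l, f l • ul l) = f m - f (m - 1) := by
  rw [lead_sum _ fun l _ => (ordGe_ul ht0 hul l _).smul _]
  simp only [lead_smul _ (ordGe_ul ht0 hul _ _), lead_ul ht hd ht0 hres hul, mul_sub, mul_ite,
    mul_one, mul_zero, Finset.sum_sub_distrib, Finset.sum_ite_eq', Finset.mem_univ, if_true]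

end ul

section xl

variable {xl : ZMod d → S.F}

theorem ordGe_xl (hxl : ∀ l : ZMod d, xl l = S.trN (l.val • t) S.x) (l : ZMod d)
    (P : W.Point) : S.OrdGe P (-2) (xl l) := by
  rw [hxl]
  exact (ordGe_x_neg_two _).trN _

theorem ordGe_xl_of_notMem (hxl : ∀ l : ZMod d, xl l = S.trN (l.val • t) S.x)
    (hP : P ∉ AddSubgroup.zmultiples t) (l : ZMod d) : S.OrdGe P 0 (xl l) := by
  rw [hxl]
  exact (ordGe_x fun h => sub_nsmul_notMem_zmultiples hP l.val (by rw [h]; exact zero_mem _)).trN _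

theorem lead_xl [NeZero d] (ht : addOrderOf t = d)
    (hxl : ∀ l : ZMod d, xl l = S.trN (l.val • t) S.x) (m l : ZMod d) :
    S.lead 2 (m.val • t) (xl l) = if l = m then 1 else 0 := by
  rw [hxl, lead_trN, ← ZMod.val_sub_nsmul ht, lead_two_x]
  simp only [ZMod.val_nsmul_eq_zero_iff ht, sub_eq_zero, @eq_comm _ m l]

theorem lead_sum_smul_xl [NeZero d] (ht : addOrderOf t = d)
    (hxl : ∀ l : ZMod d, xl l = S.trN (l.val • t) S.x) (c : ZMod d → K) (m : ZMod d) :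
    S.lead 2 (m.val • t) (∑ l, c l • xl l) = c m := by
  rw [lead_sum _ fun l _ => (ordGe_xl hxl l _).smul _]
  simp only [lead_smul _ (ordGe_xl hxl _ _), lead_xl ht hxl, mul_ite, mul_one, mul_zero,
    Finset.sum_ite_eq', Finset.mem_univ, if_true]

end xl

end FunModel

open FunModel

theorem mul_sub_C_mem_RRspace_general {K : Type*} [Field K]
    {W : WeierstrassCurve.Affine K} (S : FunModel W)
    (δ : ℕ) (hδ : 1 ≤ δ) (d : ℕ) (hd : d = 2 ^ δ) [NeZero d]
    (t : W.Point) (ht : addOrderOf t = d)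
    (𝔞 : K) (h𝔞 : algebraMap K S.F 𝔞 = ∑ l ∈ Finset.range d, S.u (l • t) ((l + 1) • t))
    (ul xl : ZMod d → S.F)
    (hul : ∀ l : ZMod d, ul l = S.u (l.val • t) ((l.val + 1) • t)
      + algebraMap K S.F ((1 - 𝔞) / (d : K)))
    (hxl : ∀ l : ZMod d, xl l = S.trN (l.val • t) S.x)
    (f g : ZMod d → K) :
    (∑ l : ZMod d, f l • ul l) * (∑ l : ZMod d, g l • ul l)
        - ∑ l : ZMod d, ((f l - f (l - 1)) * (g l - g (l - 1))) • xl l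
      ∈ S.RRset (cycDiv t) := by
  have hd1 : 1 < d := hd ▸ Nat.one_lt_two_pow (by omega)
  have ht0 : t ≠ 0 := by rintro rfl; rw [addOrderOf_zero] at ht; omega
  have hul' (l : ZMod d) :
      ul l = S.trN (l.val • t) (S.u 0 t) + algebraMap K S.F ((1 - 𝔞) / d) := by
    rw [hul, u_eq_trN, succ_nsmul, add_sub_cancel_left]
  rw [mem_RRset_iff]
  intro P
  by_cases hP : P ∈ AddSubgroup.zmultiples t
  · obtain ⟨m, rfl⟩ := exists_zmod_val_nsmul_eq ht hP
    rw [cycDiv, if_pos hP]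
    have hF (c : ZMod d → K) : S.OrdGe (m.val • t) (-1) (∑ l, c l • ul l) :=
      OrdGe.sum _ fun l _ => (ordGe_ul ht0 hul' l _).smul _
    have hC : S.OrdGe (m.val • t) (-2) (∑ l, ((f l - f (l - 1)) * (g l - g (l - 1))) • xl l) :=
      OrdGe.sum _ fun l _ => (ordGe_xl hxl l _).smul _
    refine (((hF f).mul (hF g)).sub hC).of_lead_eq_zero (n := 1 + 1) ?_
    rw [lead_sub ((hF f).mul (hF g)) hC, lead_mul (hF f) (hF g),
      lead_sum_smul_ul ht hd1 ht0 (lead_one_u_zero_self ht hd1 h𝔞) hul',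
      lead_sum_smul_ul ht hd1 ht0 (lead_one_u_zero_self ht hd1 h𝔞) hul',
      lead_sum_smul_xl ht hxl, sub_self]
  · rw [cycDiv, if_neg hP, neg_zero]
    exact ((OrdGe.sum _ fun l _ => (ordGe_ul_of_notMem ht0 hul' hP l).smul (f l)).mul
      (OrdGe.sum _ fun l _ => (ordGe_ul_of_notMem ht0 hul' hP l).smul (g l))).sub
      (OrdGe.sum _ fun l _ => (ordGe_xl_of_notMem hxl hP l).smul _)

/-- Let `E` be an elliptic curve over a field `K` of odd characteristic, `d = 2^δ` with
`δ ≥ 1`, and `t` a point of order `d` on `E`. For scalars `(f_l)`, `(g_l)` indexed by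
`ℤ/dℤ`, set `F = ∑ f_l u_l` and `G = ∑ g_l u_l` in `L(⟨t⟩)`, and
`C = ∑ (f_l - f_{l-1})(g_l - g_{l-1}) x_l` where `x_l = x ∘ τ_{-lt}`. Then the difference
`F·G - C` lies in `L(⟨t⟩)`. -/
theorem mul_sub_C_mem_RRspace {K : Type*} [Field K] (hchar : ringChar K ≠ 2)
    {W : WeierstrassCurve.Affine K} [W.IsElliptic] (S : FunModel W)
    (δ : ℕ) (hδ : 1 ≤ δ) (d : ℕ) (hd : d = 2 ^ δ) [NeZero d]
    (t : W.Point) (ht : addOrderOf t = d)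
    (𝔞 : K) (h𝔞 : algebraMap K S.F 𝔞 = ∑ l ∈ Finset.range d, S.u (l • t) ((l + 1) • t))
    (ul xl : ZMod d → S.F)
    (hul : ∀ l : ZMod d, ul l = S.u (l.val • t) ((l.val + 1) • t)
      + algebraMap K S.F ((1 - 𝔞) / (d : K)))
    (hxl : ∀ l : ZMod d, xl l = S.trN (l.val • t) S.x)
    (f g : ZMod d → K) :
    (∑ l : ZMod d, f l • ul l) * (∑ l : ZMod d, g l • ul l)
        - ∑ l : ZMod d, ((f l - f (l - 1)) * (g l - g (l - 1))) • xl l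
      ∈ S.RRset (cycDiv t) :=
  mul_sub_C_mem_RRspace_general S δ hδ d hd t ht 𝔞 h𝔞 ul xl hul hxl f g
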